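/- arXiv:2203.15036 — 4 statements merged into one kernel-verified Lean document; each statement's English description precedes it below -/
import Mathlib

section
/- Closability of the Vandermonde-weighted gradient form (Lemma 3.2 (1)): Let m ≥ 1 be an integer and R > 0. Let (f_n)_{n∈ℕ} be a sequence of smooth real-valued functions on W_R^m such that each f_n and each |∇f_n| belongs to L²(W_R^m, Δ_m dx), such that f_n → 0 in L²(W_R^m, Δ_m dx), and such that (∇f_n) is a Cauchy sequence in L²(W_R^m, Δ_m dx; ℝ^m). Then ∫_{W_R^m} |∇f_n(x)|² Δ_m(x) dx → 0 as n → ∞. (Equivalently: the pre-Dirichlet form E_{Δ_m}(f,g) = (1/2)∫_{W_R^m} ∇f·∇g Δ_m dx with domain the smooth functions of finite norm and energy is closable on L²(W_R^m, Δ_m dx).) -/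
open MeasureTheory Filter
open scoped RealInnerProductSpace

/-- The open ordered simplex `W_R^m = { x : -R < x^1 < ... < x^m < R }`. -/
def orderedSimplex (m : ℕ) (R : ℝ) : Set (Fin m → ℝ) :=
  {x | (∀ i j : Fin m, i < j → x i < x j) ∧ ∀ i, -R < x i ∧ x i < R}

/-- The squared Vandermonde difference product `Δ_m(x) = ∏_{i<j} (x^i - x^j)^2`. -/
def vandermondeSq (m : ℕ) (x : Fin m → ℝ) : ℝ :=
  ∏ i : Fin m, ∏ j ∈ Finset.Ioi i, (x i - x j) ^ 2

/-- The gradient (with respect to the open set `U`) of `f` at `x`. -/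
noncomputable def gradOn {m : ℕ} (U : Set (Fin m → ℝ)) (f : (Fin m → ℝ) → ℝ)
    (x : Fin m → ℝ) : Fin m → ℝ :=
  fun i => fderivWithin ℝ f U x (Pi.single i 1)

/-- Closability of the pre-Dirichlet form `E_w(f,g) = (1/2)∫_U ∇f·∇g w dx` on `L²(U, w dx)`:
any sequence of smooth functions on `U` of finite norm and energy, converging to `0` in
`L²(U, w dx)` and whose gradients are Cauchy in `L²(U, w dx; ℝ^m)`, has energies tending
to `0`. -/
def GradFormClosable {m : ℕ} (U : Set (Fin m → ℝ)) (w : (Fin m → ℝ) → ℝ) : Prop :=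
  ∀ f : ℕ → (Fin m → ℝ) → ℝ,
    (∀ n, ContDiffOn ℝ (⊤ : ℕ∞) (f n) U) →
    (∀ n, IntegrableOn (fun x => (f n x) ^ 2 * w x) U volume) →
    (∀ n, IntegrableOn (fun x => (∑ i, (gradOn U (f n) x i) ^ 2) * w x) U volume) →
    Tendsto (fun n => ∫ x in U, (f n x) ^ 2 * w x) atTop (nhds 0) →
    (∀ ε > (0:ℝ), ∃ N, ∀ p ≥ N, ∀ q ≥ N,
      ∫ x in U, (∑ i, (gradOn U (f p) x i - gradOn U (f q) x i) ^ 2) * w x < ε) →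
    Tendsto (fun n => ∫ x in U, (∑ i, (gradOn U (f n) x i) ^ 2) * w x) atTop (nhds 0)

section Aux

variable {m : ℕ} {R : ℝ}

lemma isOpen_orderedSimplex (m : ℕ) (R : ℝ) : IsOpen (orderedSimplex m R) := by
  have h1 : IsOpen {x : Fin m → ℝ | ∀ i j : Fin m, i < j → x i < x j} := by
    have : {x : Fin m → ℝ | ∀ i j : Fin m, i < j → x i < x j} =
        ⋂ i : Fin m, ⋂ j : Fin m, {x | i < j → x i < x j} := by
      ext x; simp [Set.mem_iInter]
    rw [this]
    refine isOpen_iInter_of_finite fun i => isOpen_iInter_of_finite fun j => ?_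
    by_cases hij : i < j
    · simp only [hij, forall_true_left]
      exact isOpen_lt (continuous_apply i) (continuous_apply j)
    · simp only [hij, false_implies]; simpa using isOpen_univ
  have h2 : IsOpen {x : Fin m → ℝ | ∀ i, -R < x i ∧ x i < R} := by
    have : {x : Fin m → ℝ | ∀ i, -R < x i ∧ x i < R} =
        ⋂ i : Fin m, ({x | -R < x i} ∩ {x | x i < R}) := by
      ext x; simp [Set.mem_iInter]
    rw [this]
    refine isOpen_iInter_of_finite fun i => IsOpen.inter ?_ ?_
    · exact isOpen_lt continuous_const (continuous_apply i)
    · exact isOpen_lt (continuous_apply i) continuous_const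
  exact h1.inter h2

lemma continuous_vandermondeSq (m : ℕ) : Continuous (vandermondeSq m) := by
  unfold vandermondeSq
  exact continuous_finset_prod _ fun i _ => continuous_finset_prod _ fun j _ =>
    ((continuous_apply i).sub (continuous_apply j)).pow 2

lemma vandermondeSq_nonneg (m : ℕ) (x : Fin m → ℝ) : 0 ≤ vandermondeSq m x :=
  Finset.prod_nonneg fun i _ => Finset.prod_nonneg fun j _ => sq_nonneg _

lemma vandermondeSq_pos {m : ℕ} {R : ℝ} {x : Fin m → ℝ} (hx : x ∈ orderedSimplex m R) :
    0 < vandermondeSq m x := by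
  refine Finset.prod_pos fun i _ => Finset.prod_pos fun j hj => ?_
  have hij : i < j := Finset.mem_Ioi.1 hj
  have h := hx.1 i j hij
  have hne : x i - x j ≠ 0 := sub_ne_zero.2 (ne_of_lt h)
  positivity

/-- Gluing: a function continuous on an open set `U`, vanishing outside a closed
subset `K ⊆ U`, is continuous. -/
lemma continuous_of_continuousOn_of_zero {E : Type*} [TopologicalSpace E]
    {U K : Set E} (hU : IsOpen U) (hK : IsClosed K) (hKU : K ⊆ U)
    {h : E → ℝ} (hcont : ContinuousOn h U) (hzero : ∀ x ∉ K, h x = 0) :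
    Continuous h := by
  rw [continuous_iff_continuousAt]
  intro x
  by_cases hx : x ∈ U
  · exact hcont.continuousAt (hU.mem_nhds hx)
  · have hxK : x ∉ K := fun hxk => hx (hKU hxk)
    have hev : h =ᶠ[nhds x] fun _ => 0 :=
      Filter.eventuallyEq_of_mem (hK.isOpen_compl.mem_nhds hxK) fun y hy => hzero y hy
    exact ContinuousAt.congr continuousAt_const hev.symm

lemma abs_coord_le_norm {m : ℕ} (y : EuclideanSpace ℝ (Fin m)) (i : Fin m) :
    |y i| ≤ ‖y‖ := by
  rw [EuclideanSpace.norm_eq]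
  have h1 : |y i| = Real.sqrt (‖y i‖ ^ 2) := by
    rw [Real.sqrt_sq_eq_abs]; simp
  rw [h1]
  apply Real.sqrt_le_sqrt
  exact Finset.single_le_sum (f := fun j => ‖y j‖ ^ 2) (fun j _ => sq_nonneg _)
    (Finset.mem_univ i)

lemma norm_toLp_sq {α : Type*} {mα : MeasurableSpace α} {μ : Measure α}
    {F : Type*} [NormedAddCommGroup F] [InnerProductSpace ℝ F] {h : α → F}
    (hm : MemLp h 2 μ) :
    ‖hm.toLp h‖ ^ 2 = ∫ x, ‖h x‖ ^ 2 ∂μ := by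
  rw [← real_inner_self_eq_norm_sq, L2.inner_def]
  refine integral_congr_ae ?_
  filter_upwards [hm.coeFn_toLp] with x hx
  rw [hx, real_inner_self_eq_norm_sq]

/-- Integration by parts on an open set `U` against a test function compactly
supported inside `U`. -/
lemma integral_ibp {m : ℕ} {U : Set (Fin m → ℝ)} (hU : IsOpen U)
    {f φ : (Fin m → ℝ) → ℝ} (hf : ContDiffOn ℝ (⊤ : ℕ∞) f U)
    (hφ : ContDiff ℝ (⊤ : ℕ∞) φ) (hφc : HasCompactSupport φ) (hφU : tsupport φ ⊆ U)
    (v : Fin m → ℝ) :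
    ∫ x in U, φ x * fderivWithin ℝ f U x v = -∫ x in U, f x * fderiv ℝ φ x v := by
  classical
  set K := tsupport φ with hK
  have hKc : IsCompact K := hφc
  set a : (Fin m → ℝ) → ℝ := fun x => φ x * fderivWithin ℝ f U x v with ha
  set b : (Fin m → ℝ) → ℝ := fun x => f x * fderiv ℝ φ x v with hb
  have hφ0 : ∀ x ∉ K, φ x = 0 := fun x hx => image_eq_zero_of_notMem_tsupport hx
  have hdφ0 : ∀ x ∉ K, fderiv ℝ φ x = 0 := by
    intro x hx
    by_contra h
    exact hx (support_fderiv_subset (𝕜 := ℝ) (f := φ) (Function.mem_support.2 h))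
  have ha0 : ∀ x ∉ K, a x = 0 := fun x hx => by simp [ha, hφ0 x hx]
  have hb0 : ∀ x ∉ K, b x = 0 := fun x hx => by simp [hb, hdφ0 x hx]
  have hfdcont : ContinuousOn (fun x => fderivWithin ℝ f U x v) U := by
    have h1 : ContinuousOn (fderiv ℝ f) U := hf.continuousOn_fderiv_of_isOpen hU (by simp)
    have h2 : ContinuousOn (fun x => fderiv ℝ f x v) U := h1.clm_apply continuousOn_const
    exact h2.congr fun x hx => by rw [fderivWithin_of_isOpen hU hx]
  have hacont : Continuous a :=
    continuous_of_continuousOn_of_zero hU hKc.isClosed hφU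
      (hφ.continuous.continuousOn.mul hfdcont) ha0
  have hbcont : Continuous b :=
    continuous_of_continuousOn_of_zero hU hKc.isClosed hφU
      (hf.continuousOn.mul
        (((hφ.continuous_fderiv (by simp)).clm_apply continuous_const).continuousOn)) hb0
  have hInta : Integrable a :=
    hacont.integrable_of_hasCompactSupport (HasCompactSupport.intro hKc ha0)
  have hIntb : Integrable b :=
    hbcont.integrable_of_hasCompactSupport (HasCompactSupport.intro hKc hb0)
  set P : (Fin m → ℝ) → ℝ := fun x => φ x * f x with hPdef
  have hP0 : ∀ x ∉ K, P x = 0 := fun x hx => by simp [hPdef, hφ0 x hx]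
  have hPcont : Continuous P :=
    continuous_of_continuousOn_of_zero hU hKc.isClosed hφU
      (hφ.continuous.continuousOn.mul hf.continuousOn) hP0
  have hIntP : Integrable P :=
    hPcont.integrable_of_hasCompactSupport (HasCompactSupport.intro hKc hP0)
  set D : (Fin m → ℝ) → ((Fin m → ℝ) →L[ℝ] ℝ) := fun x =>
    if x ∈ U then φ x • fderiv ℝ f x + f x • fderiv ℝ φ x else 0 with hD
  have hPD : ∀ x, HasFDerivAt P (D x) x := by
    intro x
    by_cases hx : x ∈ U
    · have hfd : HasFDerivAt f (fderiv ℝ f x) x :=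
        (((hf.differentiableOn (by simp)).differentiableAt (hU.mem_nhds hx)).hasFDerivAt)
      have hφd : HasFDerivAt φ (fderiv ℝ φ x) x := (hφ.differentiable (by simp) x).hasFDerivAt
      have := hφd.mul hfd
      exact this.congr_fderiv (by simp [hD, hx])
    · have hxK : x ∉ K := fun h => hx (hφU h)
      have hev : (fun _ : Fin m → ℝ => (0:ℝ)) =ᶠ[nhds x] P :=
        Filter.eventuallyEq_of_mem (hKc.isClosed.isOpen_compl.mem_nhds hxK)
          fun y hy => by simp [hPdef, hφ0 y hy]
      have h0 : HasFDerivAt (fun _ : Fin m → ℝ => (0:ℝ)) (0 : (Fin m → ℝ) →L[ℝ] ℝ) x :=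
        hasFDerivAt_const 0 x
      have := h0.congr_of_eventuallyEq hev.symm
      simpa [hD, hx] using this
  have hDv : ∀ x, D x v = a x + b x := by
    intro x
    by_cases hx : x ∈ U
    · simp only [hD, hx, if_true, ContinuousLinearMap.add_apply,
        ContinuousLinearMap.coe_smul', Pi.smul_apply, smul_eq_mul, ha, hb,
        fderivWithin_of_isOpen hU hx]
    · have hxK : x ∉ K := fun h => hx (hφU h)
      simp [hD, hx, ha0 x hxK, hb0 x hxK]
  have key : ∫ x, D x v = 0 := by
    have h1 : ∀ x : Fin m → ℝ,
        HasFDerivAt (fun _ : Fin m → ℝ => (1:ℝ)) (0 : (Fin m → ℝ) →L[ℝ] ℝ) x :=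
      fun x => hasFDerivAt_const 1 x
    have hi1 : Integrable (fun x => (ContinuousLinearMap.mul ℝ ℝ) (D x v)
        ((fun _ : Fin m → ℝ => (1:ℝ)) x)) volume := by
      simp only [ContinuousLinearMap.mul_apply', mul_one]
      exact (hInta.add hIntb).congr (Filter.Eventually.of_forall fun x => (hDv x).symm)
    have hi2 : Integrable (fun x => (ContinuousLinearMap.mul ℝ ℝ) (P x)
        (((fun _ : Fin m → ℝ => (0 : (Fin m → ℝ) →L[ℝ] ℝ)) x) v)) volume := by
      simpa using (integrable_zero _ ℝ (volume : Measure (Fin m → ℝ)))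
    have hi3 : Integrable (fun x => (ContinuousLinearMap.mul ℝ ℝ) (P x)
        ((fun _ : Fin m → ℝ => (1:ℝ)) x)) volume := by
      simpa [ContinuousLinearMap.mul_apply'] using hIntP
    have := integral_bilinear_hasFDerivAt_right_eq_neg_left_of_integrable
      (μ := volume) (B := ContinuousLinearMap.mul ℝ ℝ) (f := P) (f' := D)
      (g := fun _ => (1:ℝ)) (g' := fun _ => 0) (v := v) hi1 hi2 hi3 (fun x _ => hPD x) (fun x _ => h1 x)
    simp only [ContinuousLinearMap.mul_apply', ContinuousLinearMap.zero_apply,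
      mul_zero, mul_one, integral_zero] at this
    linarith [this]
  have hsum : (∫ x, a x) + ∫ x, b x = 0 := by
    rw [← integral_add hInta hIntb]
    rw [← key]
    exact integral_congr_ae (Filter.Eventually.of_forall fun x => (hDv x).symm)
  have hEa : ∫ x in U, a x = ∫ x, a x :=
    setIntegral_eq_integral_of_forall_compl_eq_zero fun x hx =>
      ha0 x fun hk => hx (hφU hk)
  have hEb : ∫ x in U, b x = ∫ x, b x :=
    setIntegral_eq_integral_of_forall_compl_eq_zero fun x hx =>
      hb0 x fun hk => hx (hφU hk)
  have : ∫ x in U, a x = -∫ x in U, b x := by rw [hEa, hEb]; linarith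
  exact this

lemma inner_toLp_toLp {α : Type*} {mα : MeasurableSpace α} {μ : Measure α}
    {F : Type*} [NormedAddCommGroup F] [InnerProductSpace ℝ F]
    {A B : α → F} (hA : MemLp A 2 μ) (hB : MemLp B 2 μ) :
    ⟪hA.toLp A, hB.toLp B⟫ = ∫ x, ⟪A x, B x⟫ ∂μ := by
  rw [L2.inner_def]
  refine integral_congr_ae ?_
  filter_upwards [hA.coeFn_toLp, hB.coeFn_toLp] with x h1 h2
  rw [h1, h2]

lemma inner_Lp_toLp {α : Type*} {mα : MeasurableSpace α} {μ : Measure α}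
    {F : Type*} [NormedAddCommGroup F] [InnerProductSpace ℝ F]
    (X : Lp F 2 μ) {B : α → F} (hB : MemLp B 2 μ) :
    ⟪X, hB.toLp B⟫ = ∫ x, ⟪X x, B x⟫ ∂μ := by
  rw [L2.inner_def]
  refine integral_congr_ae ?_
  filter_upwards [hB.coeFn_toLp] with x h2
  rw [h2]

end Aux

/-- Lemma 3.2 (1): the gradient form weighted by the squared Vandermonde product `Δ_m`
is closable on `L²(W_R^m, Δ_m dx)`. -/
theorem closability_vandermonde_weighted_form (m : ℕ) (hm : 1 ≤ m) (R : ℝ) (hR : 0 < R) :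
    GradFormClosable (orderedSimplex m R) (vandermondeSq m) := by
  classical
  intro f hsm hInt2 hIntE hL2 hCauchy
  set U := orderedSimplex m R with hUdef
  set w := vandermondeSq m with hwdef
  have hUo : IsOpen U := isOpen_orderedSimplex m R
  have hUm : MeasurableSet U := hUo.measurableSet
  set μ : Measure (Fin m → ℝ) := volume.restrict U with hμ
  set sw : (Fin m → ℝ) → ℝ := fun x => Real.sqrt (w x) with hsw
  have hswcont : Continuous sw := Real.continuous_sqrt.comp (continuous_vandermondeSq m)
  have hswsq : ∀ x, sw x ^ 2 = w x := fun x => Real.sq_sqrt (vandermondeSq_nonneg m x)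
  have hswnn : ∀ x, 0 ≤ sw x := fun x => Real.sqrt_nonneg _
  have hswpos : ∀ x ∈ U, 0 < sw x := fun x hx => Real.sqrt_pos.2 (vandermondeSq_pos hx)
  -- the rescaled gradients, valued in Euclidean space
  set G : ℕ → (Fin m → ℝ) → EuclideanSpace ℝ (Fin m) :=
    fun n x => WithLp.toLp 2 (fun i => gradOn U (f n) x i * sw x : Fin m → ℝ) with hG
  have hGnorm : ∀ n x, ‖G n x‖ ^ 2 = (∑ i, gradOn U (f n) x i ^ 2) * w x := by
    intro n x
    rw [EuclideanSpace.norm_eq, Real.sq_sqrt (by positivity), Finset.sum_mul]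
    refine Finset.sum_congr rfl fun i _ => ?_
    show ‖gradOn U (f n) x i * sw x‖ ^ 2 = _
    rw [norm_mul, mul_pow, Real.norm_eq_abs, Real.norm_eq_abs, sq_abs, sq_abs, hswsq x]
  have hGmeas : ∀ n, AEStronglyMeasurable (G n) μ := by
    intro n
    have hmg : Measurable
        (fun x => (fun i => fderiv ℝ (f n) x (Pi.single i 1) * sw x : Fin m → ℝ)) :=
      measurable_pi_iff.2 fun i =>
        (measurable_fderiv_apply_const (𝕜 := ℝ) (f := f n) (Pi.single i 1 : Fin m → ℝ)).mul hswcont.measurable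
    have hcont : Continuous
        ((EuclideanSpace.equiv (Fin m) ℝ : EuclideanSpace ℝ (Fin m) ≃L[ℝ] (Fin m → ℝ)).symm : (Fin m → ℝ) → EuclideanSpace ℝ (Fin m)) :=
      (EuclideanSpace.equiv (Fin m) ℝ : EuclideanSpace ℝ (Fin m) ≃L[ℝ] (Fin m → ℝ)).symm.continuous
    have hmeas : AEStronglyMeasurable (fun x => (EuclideanSpace.equiv (Fin m) ℝ : EuclideanSpace ℝ (Fin m) ≃L[ℝ] (Fin m → ℝ)).symm
        (fun i => fderiv ℝ (f n) x (Pi.single i 1) * sw x)) μ :=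
      (hcont.measurable.comp hmg).aestronglyMeasurable
    refine hmeas.congr ?_
    filter_upwards [ae_restrict_mem hUm] with x hx
    ext i
    show (fun i => fderiv ℝ (f n) x (Pi.single i 1) * sw x : Fin m → ℝ) i = _
    simp only [hG, gradOn, fderivWithin_of_isOpen hUo hx]
  have hGmem : ∀ n, MemLp (G n) 2 μ := by
    intro n
    refine (memLp_two_iff_integrable_sq_norm (hGmeas n)).2 ?_
    exact (hIntE n).congr (Filter.Eventually.of_forall fun x => (hGnorm n x).symm)
  set GLn : ℕ → Lp (EuclideanSpace ℝ (Fin m)) 2 μ := fun n => (hGmem n).toLp (G n) with hGLn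
  -- Cauchy
  have hGLncauchy : CauchySeq GLn := by
    rw [Metric.cauchySeq_iff]
    intro ε hε
    obtain ⟨N, hN⟩ := hCauchy (ε ^ 2) (by positivity)
    refine ⟨N, fun p hp q hq => ?_⟩
    have hsub : dist (GLn p) (GLn q) = ‖((hGmem p).sub (hGmem q)).toLp (G p - G q)‖ := by
      rw [dist_eq_norm, MemLp.toLp_sub]
    have hnorm := norm_toLp_sq ((hGmem p).sub (hGmem q))
    have hpoint : ∀ x, ‖(G p - G q) x‖ ^ 2 =
        (∑ i, (gradOn U (f p) x i - gradOn U (f q) x i) ^ 2) * w x := by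
      intro x
      have hx : (G p - G q) x =
          WithLp.toLp 2 (fun i => (gradOn U (f p) x i - gradOn U (f q) x i) * sw x : Fin m → ℝ) := by
        ext i
        show G p x i - G q x i = _
        simp only [hG]; ring
      rw [hx, EuclideanSpace.norm_eq, Real.sq_sqrt (by positivity), Finset.sum_mul]
      refine Finset.sum_congr rfl fun i _ => ?_
      show ‖(gradOn U (f p) x i - gradOn U (f q) x i) * sw x‖ ^ 2 = _
      rw [norm_mul, mul_pow, Real.norm_eq_abs, Real.norm_eq_abs, sq_abs, sq_abs, hswsq x]
    have hlt : ‖((hGmem p).sub (hGmem q)).toLp (G p - G q)‖ ^ 2 < ε ^ 2 := by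
      rw [hnorm]
      calc ∫ x, ‖(G p - G q) x‖ ^ 2 ∂μ
          = ∫ x, (∑ i, (gradOn U (f p) x i - gradOn U (f q) x i) ^ 2) * w x ∂μ :=
            integral_congr_ae (Filter.Eventually.of_forall hpoint)
        _ < ε ^ 2 := hN p hp q hq
    rw [hsub]
    exact lt_of_pow_lt_pow_left₀ 2 hε.le hlt
  obtain ⟨Glim, hGlim⟩ := cauchySeq_tendsto_of_complete hGLncauchy
  -- energies equal norms squared
  have hEn : ∀ n, ∫ x, (∑ i, gradOn U (f n) x i ^ 2) * w x ∂μ = ‖GLn n‖ ^ 2 := by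
    intro n
    rw [hGLn]
    rw [norm_toLp_sq (hGmem n)]
    exact integral_congr_ae (Filter.Eventually.of_forall fun x => (hGnorm n x).symm)
  -- it suffices to show the limit vanishes
  suffices hlim0 : ‖Glim‖ = 0 by
    have h1 : Tendsto (fun n => ‖GLn n‖) atTop (nhds 0) := by
      have := hGlim.norm
      rwa [hlim0] at this
    have h2 : Tendsto (fun n => ‖GLn n‖ ^ 2) atTop (nhds 0) := by
      have := h1.pow 2
      simpa using this
    have h3 : (fun n => ∫ x, (∑ i, gradOn U (f n) x i ^ 2) * w x ∂μ)
        = fun n => ‖GLn n‖ ^ 2 := funext hEn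
    rw [h3]
    exact h2
  -- per-coordinate vanishing of the limit
  have hcoord : ∀ i : Fin m, ∀ᵐ x ∂μ, Glim x i = 0 := by
    intro i
    set v : Fin m → ℝ := Pi.single i 1 with hv
    set Fn : ℕ → (Fin m → ℝ) → ℝ := fun n x => f n x * sw x with hFn
    have hFmeas : ∀ n, AEStronglyMeasurable (Fn n) μ := fun n =>
      (((hsm n).continuousOn.aemeasurable hUm).mul
        hswcont.measurable.aemeasurable).aestronglyMeasurable
    have hFmem : ∀ n, MemLp (Fn n) 2 μ := by
      intro n
      refine (memLp_two_iff_integrable_sq_norm (hFmeas n)).2 ?_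
      refine (hInt2 n).congr (Filter.Eventually.of_forall fun x => ?_)
      show f n x ^ 2 * w x = ‖f n x * sw x‖ ^ 2
      rw [norm_mul, mul_pow, Real.norm_eq_abs, Real.norm_eq_abs, sq_abs, sq_abs, hswsq x]
    set FLn : ℕ → Lp ℝ 2 μ := fun n => (hFmem n).toLp (Fn n) with hFLn
    have hFL0 : Tendsto (fun n => ‖FLn n‖) atTop (nhds 0) := by
      have h2 : ∀ n, ‖FLn n‖ ^ 2 = ∫ x, f n x ^ 2 * w x ∂μ := by
        intro n
        rw [hFLn, norm_toLp_sq (hFmem n)]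
        refine integral_congr_ae (Filter.Eventually.of_forall fun x => ?_)
        show ‖f n x * sw x‖ ^ 2 = f n x ^ 2 * w x
        rw [norm_mul, mul_pow, Real.norm_eq_abs, Real.norm_eq_abs, sq_abs, sq_abs, hswsq x]
      have h3 : Tendsto (fun n => ‖FLn n‖ ^ 2) atTop (nhds 0) := by
        rw [show (fun n => ‖FLn n‖ ^ 2) = fun n => ∫ x, f n x ^ 2 * w x ∂μ from funext h2]
        exact hL2
      have h4 := (Real.continuous_sqrt.tendsto 0).comp h3
      simp only [Function.comp_def, Real.sqrt_zero] at h4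
      refine h4.congr fun n => ?_
      exact Real.sqrt_sq (norm_nonneg _)
    set q : (Fin m → ℝ) → ℝ := fun x => Glim x i / sw x with hq
    have hGcoordmeas : AEStronglyMeasurable (fun y => Glim y i) μ :=
      (EuclideanSpace.proj i :
        EuclideanSpace ℝ (Fin m) →L[ℝ] ℝ).continuous.comp_aestronglyMeasurable
        (Lp.aestronglyMeasurable Glim)
    have hqmeas : AEStronglyMeasurable q μ :=
      (hGcoordmeas.aemeasurable.div hswcont.aemeasurable).aestronglyMeasurable
    have hloc : LocallyIntegrableOn q U μ := by
      intro x hx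
      obtain ⟨K', hK'c, hxint, hK'U⟩ := exists_compact_subset hUo hx
      have hK'm : MeasurableSet K' := hK'c.isClosed.measurableSet
      refine ⟨K', mem_nhdsWithin_of_mem_nhds
        (mem_of_superset (isOpen_interior.mem_nhds hxint) interior_subset), ?_⟩
      obtain ⟨z, hzK, hz⟩ := hK'c.exists_isMinOn ⟨x, interior_subset hxint⟩
        hswcont.continuousOn
      have hcz : 0 < sw z := hswpos z (hK'U hzK)
      have hGcoordmem : MemLp (fun y => Glim y i) 2 μ := by
        refine MemLp.of_le (Lp.memLp Glim) hGcoordmeas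
          (Filter.Eventually.of_forall fun y => ?_)
        simpa [Real.norm_eq_abs] using abs_coord_le_norm (Glim y) i
      haveI : IsFiniteMeasure (μ.restrict K') := by
        constructor
        rw [Measure.restrict_apply_univ]
        calc μ K' = volume (K' ∩ U) := by rw [hμ, Measure.restrict_apply hK'm]
          _ ≤ volume K' := measure_mono Set.inter_subset_left
          _ < ⊤ := hK'c.measure_lt_top
      have hint : Integrable (fun y => Glim y i) (μ.restrict K') :=
        (hGcoordmem.restrict K').integrable one_le_two
      refine Integrable.mono' (hint.abs.const_mul ((sw z)⁻¹)) hqmeas.restrict ?_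
      filter_upwards [ae_restrict_mem hK'm] with y hy
      have hswy : sw z ≤ sw y := hz hy
      have h0 : 0 < sw y := lt_of_lt_of_le hcz hswy
      rw [hq]
      rw [Real.norm_eq_abs, abs_div, abs_of_pos h0, div_eq_inv_mul]
      have hinv : (sw y)⁻¹ ≤ (sw z)⁻¹ := inv_anti₀ hcz hswy
      exact mul_le_mul_of_nonneg_right hinv (abs_nonneg _)
    have htest : ∀ φ : (Fin m → ℝ) → ℝ,
        ContDiff ℝ (⊤ : ℕ∞) φ → HasCompactSupport φ → tsupport φ ⊆ U →
        ∫ x, φ x • q x ∂μ = 0 := by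
      intro φ hφ hφc hφU
      set K := tsupport φ with hK
      have hKc : IsCompact K := hφc
      have hKm : MeasurableSet K := hKc.isClosed.measurableSet
      have hφ0 : ∀ x ∉ K, φ x = 0 := fun x hx => image_eq_zero_of_notMem_tsupport hx
      rcases K.eq_empty_or_nonempty with hKe | hKne
      · have hz : ∀ x, φ x = 0 := fun x => hφ0 x (by rw [hKe]; exact Set.notMem_empty x)
        simp [hz]
      obtain ⟨z, hzK, hz⟩ := hKc.exists_isMinOn hKne hswcont.continuousOn
      have hc : 0 < sw z := hswpos z (hφU hzK)
      set dφ : (Fin m → ℝ) → ℝ := fun x => fderiv ℝ φ x v with hdφ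
      have hdφcont : Continuous dφ := (hφ.continuous_fderiv (by simp)).clm_apply continuous_const
      have hdφ0 : ∀ x ∉ K, dφ x = 0 := by
        intro x hx
        have h1 : fderiv ℝ φ x = 0 := by
          by_contra h
          exact hx (support_fderiv_subset (𝕜 := ℝ) (f := φ) (Function.mem_support.2 h))
        rw [hdφ]; simp [h1]
      -- membership of `ψ/sw` in L² for bounded ψ supported in K
      have hmemdiv : ∀ (C : ℝ) (ψ : (Fin m → ℝ) → ℝ), Continuous ψ → (∀ x ∉ K, ψ x = 0) →
          (∀ x ∈ K, |ψ x| ≤ C) → MemLp (fun x => ψ x / sw x) 2 μ := by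
        intro C ψ hψc hψ0 hψb
        have hCnn : 0 ≤ C := le_trans (abs_nonneg _) (hψb z hzK)
        have hmeas : AEStronglyMeasurable (fun x => ψ x / sw x) μ :=
          (hψc.measurable.aemeasurable.div hswcont.aemeasurable).aestronglyMeasurable
        refine (memLp_two_iff_integrable_sq_norm hmeas).2 ?_
        have hbd : Integrable (K.indicator (fun _ => (C / sw z) ^ 2)) μ := by
          rw [integrable_indicator_iff hKm]
          refine integrableOn_const (LT.lt.ne ?_)
          calc μ K = volume (K ∩ U) := by rw [hμ, Measure.restrict_apply hKm]
            _ ≤ volume K := measure_mono Set.inter_subset_left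
            _ < ⊤ := hKc.measure_lt_top
        refine Integrable.mono' hbd
          (((hmeas.norm).aemeasurable.pow_const 2).aestronglyMeasurable) ?_
        refine Filter.Eventually.of_forall fun x => ?_
        by_cases hxK : x ∈ K
        · rw [Set.indicator_of_mem hxK]
          have h1 : ‖‖ψ x / sw x‖ ^ 2‖ = (|ψ x| / sw x) ^ 2 := by
            rw [Real.norm_eq_abs, Real.norm_eq_abs, abs_div, abs_of_nonneg (hswnn x),
              abs_of_nonneg (by positivity)]
          rw [h1]
          have h2 : |ψ x| / sw x ≤ C / sw z :=
            div_le_div₀ hCnn (hψb x hxK) hc (hz hxK)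
          exact pow_le_pow_left₀ (by positivity) h2 2
        · rw [Set.indicator_of_notMem hxK, hψ0 x hxK]
          simp
      obtain ⟨z2, hz2K, hz2⟩ := hKc.exists_isMaxOn hKne
        (continuous_abs.comp hφ.continuous).continuousOn
      obtain ⟨z3, hz3K, hz3⟩ := hKc.exists_isMaxOn hKne
        (continuous_abs.comp hdφcont).continuousOn
      have hφmem : MemLp (fun x => φ x / sw x) 2 μ :=
        hmemdiv (|φ z2|) φ hφ.continuous hφ0 (fun x hx => hz2 hx)
      have hdφmem : MemLp (fun x => dφ x / sw x) 2 μ :=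
        hmemdiv (|dφ z3|) dφ hdφcont hdφ0 (fun x hx => hz3 hx)
      set H : (Fin m → ℝ) → EuclideanSpace ℝ (Fin m) :=
        fun x => EuclideanSpace.single i (φ x / sw x) with hH
      have hHmeas : AEStronglyMeasurable H μ := by
        have hp : Measurable (fun x => (Pi.single i (φ x / sw x) : Fin m → ℝ)) := by
          refine measurable_pi_iff.2 fun j => ?_
          by_cases hji : j = i
          · subst hji
            simp
            exact hφ.continuous.measurable.div hswcont.measurable
          · simpa [Pi.single_apply, hji] using measurable_const (a := (0:ℝ))
              (m := by infer_instance)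
        have hcont : Continuous
            ((EuclideanSpace.equiv (Fin m) ℝ :
              EuclideanSpace ℝ (Fin m) ≃L[ℝ] (Fin m → ℝ)).symm :
              (Fin m → ℝ) → EuclideanSpace ℝ (Fin m)) :=
          (EuclideanSpace.equiv (Fin m) ℝ :
            EuclideanSpace ℝ (Fin m) ≃L[ℝ] (Fin m → ℝ)).symm.continuous
        have : Measurable H := by
          have := hcont.measurable.comp hp
          convert this using 1
          rfl
        exact this.aestronglyMeasurable
      have hHmem : MemLp H 2 μ := by
        refine (memLp_two_iff_integrable_sq_norm hHmeas).2 ?_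
        have h1 := (memLp_two_iff_integrable_sq_norm hφmem.aestronglyMeasurable).1 hφmem
        refine h1.congr (Filter.Eventually.of_forall fun x => ?_)
        show ‖φ x / sw x‖ ^ 2 = ‖EuclideanSpace.single i (φ x / sw x)‖ ^ 2
        rw [EuclideanSpace.norm_single]
      have hpair1 : ∀ n, ⟪GLn n, hHmem.toLp H⟫
          = ∫ x in U, φ x * fderivWithin ℝ (f n) U x v ∂volume := by
        intro n
        rw [hGLn, inner_toLp_toLp (hGmem n) hHmem, hμ]
        refine setIntegral_congr_fun hUm fun x hx => ?_
        simp only [hH]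
        rw [EuclideanSpace.inner_single_right]
        simp only [conj_trivial]
        have hne : sw x ≠ 0 := (hswpos x hx).ne'
        show (φ x / sw x) * (gradOn U (f n) x i * sw x) = _
        rw [gradOn]
        field_simp
        ring
      have hibp : ∀ n, ∫ x in U, φ x * fderivWithin ℝ (f n) U x v ∂volume
          = -∫ x in U, f n x * fderiv ℝ φ x v ∂volume := fun n =>
        integral_ibp hUo (hsm n) hφ hφc hφU v
      have hpair2 : ∀ n, ∫ x in U, f n x * fderiv ℝ φ x v ∂volume
          = ⟪FLn n, hdφmem.toLp _⟫ := by
        intro n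
        rw [hFLn, inner_toLp_toLp (hFmem n) hdφmem, hμ]
        refine (setIntegral_congr_fun hUm fun x hx => ?_).symm
        have hne : sw x ≠ 0 := (hswpos x hx).ne'
        rw [show ⟪Fn n x, dφ x / sw x⟫ = Fn n x * (dφ x / sw x) by simp [mul_comm]]
        rw [hFn, hdφ]
        field_simp
      have hten : Tendsto (fun n => ⟪GLn n, hHmem.toLp H⟫) atTop (nhds 0) := by
        have heq : (fun n => ⟪GLn n, hHmem.toLp H⟫)
            = fun n => -⟪FLn n, hdφmem.toLp _⟫ := by
          funext n
          rw [hpair1 n, hibp n, hpair2 n]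
        rw [heq]
        have hsq : Tendsto (fun n => ⟪FLn n, hdφmem.toLp _⟫) atTop (nhds 0) := by
          refine squeeze_zero_norm
            (a := fun n => ‖FLn n‖ * ‖(hdφmem.toLp _ : Lp ℝ 2 μ)‖) (fun n => ?_) ?_
          · rw [Real.norm_eq_abs]
            exact abs_real_inner_le_norm _ _
          · simpa using hFL0.mul_const ‖(hdφmem.toLp _ : Lp ℝ 2 μ)‖
        simpa using hsq.neg
      have hten2 : Tendsto (fun n => ⟪GLn n, hHmem.toLp H⟫) atTop
          (nhds ⟪Glim, hHmem.toLp H⟫) := hGlim.inner tendsto_const_nhds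
      have hzero : ⟪Glim, hHmem.toLp H⟫ = 0 := tendsto_nhds_unique hten2 hten
      rw [inner_Lp_toLp Glim hHmem] at hzero
      rw [← hzero]
      refine integral_congr_ae (Filter.Eventually.of_forall fun x => ?_)
      simp only [hH]
      rw [EuclideanSpace.inner_single_right]
      simp only [conj_trivial, smul_eq_mul, hq]
      ring
    have hae := hUo.ae_eq_zero_of_integral_contDiff_smul_eq_zero (μ := μ) hloc
      (fun g hg hgc hgU => htest g hg hgc hgU)
    filter_upwards [hae, ae_restrict_mem hUm] with x hx hxU
    have h1 : q x = 0 := hx hxU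
    have h2 : sw x ≠ 0 := (hswpos x hxU).ne'
    rw [hq] at h1
    rcases div_eq_zero_iff.1 h1 with h | h
    · exact h
    · exact absurd h h2
  have hg0 : (⇑Glim : (Fin m → ℝ) → EuclideanSpace ℝ (Fin m)) =ᵐ[μ] 0 := by
    have hall : ∀ᵐ x ∂μ, ∀ i, Glim x i = 0 := ae_all_iff.2 hcoord
    filter_upwards [hall] with x hx
    ext i
    exact hx i
  have hnormsq : ‖Glim‖ ^ 2 = 0 := by
    have h0 : ‖Glim‖ ^ 2 = ∫ x, ‖(Glim : (Fin m → ℝ) → EuclideanSpace ℝ (Fin m)) x‖ ^ 2 ∂μ := by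
      conv_lhs => rw [← Lp.toLp_coeFn Glim (Lp.memLp Glim)]
      exact norm_toLp_sq (Lp.memLp Glim)
    rw [h0]
    rw [integral_congr_ae (g := fun _ => (0:ℝ)) ?_]
    · simp
    · filter_upwards [hg0] with x hx
      rw [hx]
      simp
  have := sq_eq_zero_iff.1 hnormsq
  exact this
end

section
/- Invariant functions of a Markov kernel with transition laws equivalent to the stationary measure are constant (the mechanism of Lemma 3.3 (1) and Theorem 3.5 (2), based on the everywhere-positive transition density of Lemma 3.2 (2)): Let (X, 𝓑) be a measurable space, μ a probability measure on X, and κ a Markov kernel on X such that μ is invariant under κ (i.e., μ.bind κ = μ, equivalently ∫_X κ(x, A) μ(dx) = μ(A) for all A ∈ 𝓑) and such that for μ-a.e. x the probability measure κ(x, ·) and μ are mutually absolutely continuous. If f : X → ℝ is bounded measurable and satisfies ∫_X f(y) κ(x, dy) = f(x) for μ-a.e. x, then there is a constant a ∈ ℝ such that f = a μ-a.e. -/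
/-!
Invariance of `μ` identifies `∫∫ f(y)² κ(x, dy) μ(dx)` with `∫ f² dμ`, so for a harmonic `f` the
energy `∫∫ (f y - f x)² κ(x, dy) μ(dx)`, which is the `μ`-average of the variances `∫ f² dκ x - (f x)²`,
vanishes. Hence `f = f x` holds `κ x`-a.e. for `μ`-a.e. `x`, and `μ ≪ κ x` makes it hold `μ`-a.e.
-/

open MeasureTheory ProbabilityTheory

section Bind

variable {α β E : Type*} {mα : MeasurableSpace α} {mβ : MeasurableSpace β}
  [NormedAddCommGroup E] [NormedSpace ℝ E] {μ : Measure α} {κ : Kernel α β} {g : β → E}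

lemma integral_bind_eq_integral_integral (hg : Integrable g (μ.bind κ)) :
    ∫ y, g y ∂(μ.bind κ) = ∫ x, ∫ y, g y ∂κ x ∂μ := by
  rw [Measure.comp_eq_comp_const_apply] at hg ⊢
  simpa using Kernel.integral_comp hg

lemma MeasureTheory.Integrable.integral_of_bind (hg : Integrable g (μ.bind κ)) :
    Integrable (fun x ↦ ∫ y, g y ∂κ x) μ := by
  rw [Measure.comp_eq_comp_const_apply] at hg
  simpa using hg.integral_comp

end Bind

lemma integral_sq_sub_eq_of_integral_eq {Ω : Type*} {mΩ : MeasurableSpace Ω} {ν : Measure Ω}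
    [IsProbabilityMeasure ν] {f : Ω → ℝ} (hf : MemLp f 2 ν) {c : ℝ} (hc : ∫ y, f y ∂ν = c) :
    ∫ y, (f y - c) ^ 2 ∂ν = ∫ y, f y ^ 2 ∂ν - c ^ 2 := by
  rw [← hc, ← variance_eq_integral hf.aemeasurable, variance_eq_sub hf]
  rfl

section Invariant

variable {X : Type*} [MeasurableSpace X] {μ : Measure X} [IsProbabilityMeasure μ]
  {κ : Kernel X X} [IsMarkovKernel κ] {f : X → ℝ} {C : ℝ}

lemma memLp_of_abs_le {ν : Measure X} [IsFiniteMeasure ν] (hf : Measurable f)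
    (hbd : ∀ x, |f x| ≤ C) (p : ENNReal) : MemLp f p ν :=
  .of_bound hf.aestronglyMeasurable C (ae_of_all _ hbd)

lemma integrable_sq_sub_compProd (hf : Measurable f) (hbd : ∀ x, |f x| ≤ C) :
    Integrable (fun p : X × X ↦ (f p.2 - f p.1) ^ 2) (μ ⊗ₘ κ) :=
  ((memLp_of_abs_le (hf.comp measurable_snd) (fun p ↦ hbd p.2) 2).sub
    (memLp_of_abs_le (hf.comp measurable_fst) (fun p ↦ hbd p.1) 2)).integrable_sq

lemma integral_sq_sub_compProd_eq_zero (hinv : μ.bind κ = μ) (hf : Measurable f)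
    (hbd : ∀ x, |f x| ≤ C) (hharm : ∀ᵐ x ∂μ, ∫ y, f y ∂κ x = f x) :
    ∫ p, (f p.2 - f p.1) ^ 2 ∂(μ ⊗ₘ κ) = 0 := by
  have hf₂ (ν : Measure X) [IsFiniteMeasure ν] : MemLp f 2 ν := memLp_of_abs_le hf hbd 2
  have hsq : Integrable (fun y ↦ f y ^ 2) (μ.bind κ) := by
    rw [hinv]; exact (hf₂ μ).integrable_sq
  calc ∫ p, (f p.2 - f p.1) ^ 2 ∂(μ ⊗ₘ κ)
      = ∫ x, (∫ y, f y ^ 2 ∂κ x - f x ^ 2) ∂μ := by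
        rw [Measure.integral_compProd (integrable_sq_sub_compProd hf hbd)]
        exact integral_congr_ae (hharm.mono fun x hx ↦ integral_sq_sub_eq_of_integral_eq (hf₂ _) hx)
    _ = ∫ y, f y ^ 2 ∂(μ.bind κ) - ∫ x, f x ^ 2 ∂μ := by
        rw [integral_sub hsq.integral_of_bind (hf₂ μ).integrable_sq,
          integral_bind_eq_integral_integral hsq]
    _ = 0 := by rw [hinv, sub_self]

lemma ae_ae_eq_of_bind_eq_of_integral_eq (hinv : μ.bind κ = μ) (hf : Measurable f)
    (hbd : ∀ x, |f x| ≤ C) (hharm : ∀ᵐ x ∂μ, ∫ y, f y ∂κ x = f x) :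
    ∀ᵐ x ∂μ, ∀ᵐ y ∂κ x, f y = f x := by
  have hzero : (fun p : X × X ↦ (f p.2 - f p.1) ^ 2) =ᵐ[μ ⊗ₘ κ] 0 :=
    (integral_eq_zero_iff_of_nonneg (fun _ ↦ sq_nonneg _) (integrable_sq_sub_compProd hf hbd)).mp
      (integral_sq_sub_compProd_eq_zero hinv hf hbd hharm)
  filter_upwards [Measure.ae_ae_of_ae_compProd hzero] with x hx
  filter_upwards [hx] with y hy
  simpa [sub_eq_zero] using hy

end Invariant

/-- Invariant functions of a Markov kernel whose transition laws are (a.e.) mutually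
absolutely continuous with the stationary measure are a.e. constant. -/
theorem invariant_function_of_equivalent_kernel_constant
    {X : Type*} [MeasurableSpace X] (μ : Measure X) [IsProbabilityMeasure μ]
    (κ : Kernel X X) [IsMarkovKernel κ]
    (hinv : μ.bind (fun x => κ x) = μ)
    (hequiv : ∀ᵐ x ∂μ, κ x ≪ μ ∧ μ ≪ κ x)
    (f : X → ℝ) (hf : Measurable f) (C : ℝ) (hbd : ∀ x, |f x| ≤ C)
    (hharm : ∀ᵐ x ∂μ, ∫ y, f y ∂(κ x) = f x) :
    ∃ a : ℝ, ∀ᵐ x ∂μ, f x = a := by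
  have hconst : ∀ᵐ x ∂μ, ∀ᵐ y ∂μ, f y = f x := by
    filter_upwards [ae_ae_eq_of_bind_eq_of_integral_eq hinv hf hbd hharm, hequiv]
      with x hx hx_equiv
    exact hx_equiv.2.ae_le hx
  obtain ⟨x₀, hx₀⟩ := hconst.exists
  exact ⟨f x₀, hx₀⟩
end

section
/- Extremality of a symmetric invariant measure whose bounded harmonic functions are trivial (Lemma 5.1): Let (X, 𝓑) be a measurable space, μ a probability measure on X, and κ a Markov kernel on X such that (i) μ is invariant under κ (μ.bind κ = μ); (ii) κ is μ-symmetric, i.e., ∫_X f(x) (∫_X g(y) κ(x,dy)) μ(dx) = ∫_X (∫_X f(y) κ(x,dy)) g(x) μ(dx) for all bounded measurable f, g : X → ℝ; and (iii) every bounded measurable h : X → ℝ with ∫_X h(y) κ(x,dy) = h(x) for μ-a.e. x is μ-a.e. constant. Then μ is extremal in the set of κ-invariant probability measures: if μ = α₁ μ₁ + α₂ μ₂ where 0 < α₁, α₂ < 1, α₁ + α₂ = 1, and μ₁, μ₂ are probability measures on X invariant under κ (μᵢ.bind κ = μᵢ), then μ₁ = μ₂ = μ. -/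
/-!
If `α • ν ≤ μ` with `α > 0` and `ν` a `κ`-invariant probability measure, then `ν` has a bounded
density `h` with respect to `μ`. For bounded measurable `g`, symmetry of `κ` and invariance of `ν`
give `∫ (κh) g dμ = ∫ h (κg) dμ = ∫ κg dν = ∫ g dν = ∫ h g dμ`, so `h` is harmonic, hence
a.e. constant, and the constant is `1` because both measures have mass one. In a decomposition
`μ = α₁ μ₁ + α₂ μ₂` each `μᵢ` satisfies `αᵢ • μᵢ ≤ μ`.
-/

open MeasureTheory ProbabilityTheory
open scoped ENNReal

section

variable {X Y : Type*} [MeasurableSpace X] [MeasurableSpace Y]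

lemma abs_integral_le_of_abs_le {ρ : Measure X} [IsProbabilityMeasure ρ] {f : X → ℝ} {C : ℝ}
    (hC : ∀ x, |f x| ≤ C) : |∫ x, f x ∂ρ| ≤ C := by
  simpa using norm_integral_le_of_norm_le_const (μ := ρ) (f := f) (ae_of_all _ hC)

lemma integral_mul_indicator_one {μ : Measure X} (u : X → ℝ) {s : Set X} (hs : MeasurableSet s) :
    ∫ x, u x * s.indicator 1 x ∂μ = ∫ x in s, u x ∂μ := by
  rw [← integral_indicator hs]
  congr 1 with x
  by_cases hx : x ∈ s <;> simp [hx]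

lemma Measurable.integral_kernel {κ : Kernel X Y} {f : Y → ℝ} (hf : Measurable f) :
    Measurable fun x => ∫ y, f y ∂(κ x) :=
  hf.stronglyMeasurable.integral_kernel.measurable

lemma Measure.integral_bind_kernel {μ : Measure X} {κ : Kernel X Y} [IsSFiniteKernel κ]
    {f : Y → ℝ} (hf : Integrable f (μ.bind κ)) :
    ∫ y, f y ∂(μ.bind κ) = ∫ x, ∫ y, f y ∂(κ x) ∂μ := by
  rw [Measure.comp_eq_comp_const_apply] at hf ⊢
  rw [Kernel.integral_comp hf]
  simp

lemma Measure.exists_bounded_density_of_smul_le {μ ν : Measure X} [SigmaFinite μ]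
    [IsFiniteMeasure ν] {α : ℝ≥0∞} (hα₀ : α ≠ 0) (hα : α ≠ ∞) (hle : α • ν ≤ μ) :
    ∃ h : X → ℝ, Measurable h ∧ (∀ x, |h x| ≤ α⁻¹.toReal) ∧
      ∀ f : X → ℝ, ∫ x, f x ∂ν = ∫ x, h x * f x ∂μ := by
  have hac : ν ≪ μ :=
    (Measure.absolutelyContinuous_smul hα₀).trans (Measure.absolutelyContinuous_of_le hle)
  have hbd : ∀ᵐ x ∂μ, ν.rnDeriv μ x ≤ α⁻¹ := by
    filter_upwards [Measure.rnDeriv_le_one_of_le hle, ν.rnDeriv_smul_left_of_ne_top μ hα]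
      with x h_le_one h_smul
    rw [h_smul] at h_le_one
    rw [ENNReal.le_inv_iff_mul_le, mul_comm]
    exact h_le_one
  refine ⟨fun x => (min (ν.rnDeriv μ x) α⁻¹).toReal,
    ((ν.measurable_rnDeriv μ).min measurable_const).ennreal_toReal, fun x => ?_, fun f => ?_⟩
  · rw [abs_of_nonneg ENNReal.toReal_nonneg]
    exact ENNReal.toReal_mono (ENNReal.inv_ne_top.2 hα₀) (min_le_right _ _)
  · rw [← integral_toReal_rnDeriv_mul hac]
    refine integral_congr_ae ?_
    filter_upwards [hbd] with x hx
    simp [min_eq_left hx]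

namespace ProbabilityTheory.Kernel

def IsSymmetric (κ : Kernel X X) (μ : Measure X) : Prop :=
  ∀ f g : X → ℝ, Measurable f → Measurable g → (∃ C, ∀ x, |f x| ≤ C) → (∃ C, ∀ x, |g x| ≤ C) →
    ∫ x, f x * ∫ y, g y ∂(κ x) ∂μ = ∫ x, (∫ y, f y ∂(κ x)) * g x ∂μ

variable {μ : Measure X} {κ : Kernel X X} [IsMarkovKernel κ]

theorem IsSymmetric.ae_integral_eq_of_density [IsFiniteMeasure μ] (hsymm : κ.IsSymmetric μ)
    {ν : Measure X} [IsFiniteMeasure ν] (hν : ν.bind κ = ν) {h : X → ℝ} (hm : Measurable h)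
    {C : ℝ} (hC : ∀ x, |h x| ≤ C) (hdens : ∀ f : X → ℝ, ∫ x, f x ∂ν = ∫ x, h x * f x ∂μ) :
    ∀ᵐ x ∂μ, ∫ y, h y ∂(κ x) = h x := by
  have hKm : Measurable fun x => ∫ y, h y ∂(κ x) := hm.integral_kernel
  have hKC : ∀ x, |∫ y, h y ∂(κ x)| ≤ C := fun x => abs_integral_le_of_abs_le hC
  refine Integrable.ae_eq_of_forall_setIntegral_eq _ _
    (.of_bound hKm.aestronglyMeasurable C (ae_of_all _ hKC))
    (.of_bound hm.aestronglyMeasurable C (ae_of_all _ hC)) fun s hs _ => ?_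
  have hsm : Measurable (s.indicator (1 : X → ℝ)) := measurable_one.indicator hs
  have hsC : ∀ x, |s.indicator (1 : X → ℝ) x| ≤ 1 := fun x => by
    by_cases hx : x ∈ s <;> simp [hx]
  calc ∫ x in s, ∫ y, h y ∂(κ x) ∂μ
      = ∫ x, (∫ y, h y ∂(κ x)) * s.indicator 1 x ∂μ := (integral_mul_indicator_one _ hs).symm
    _ = ∫ x, h x * ∫ y, s.indicator 1 y ∂(κ x) ∂μ := (hsymm _ _ hm hsm ⟨C, hC⟩ ⟨1, hsC⟩).symm
    _ = ∫ x, ∫ y, s.indicator 1 y ∂(κ x) ∂ν := (hdens _).symm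
    _ = ∫ x, s.indicator 1 x ∂ν := by
      have hsi : Integrable (s.indicator (1 : X → ℝ)) (ν.bind κ) :=
        hν ▸ .of_bound hsm.aestronglyMeasurable 1 (ae_of_all _ hsC)
      rw [← Measure.integral_bind_kernel hsi, hν]
    _ = ∫ x, h x * s.indicator 1 x ∂μ := hdens _
    _ = ∫ x in s, h x ∂μ := integral_mul_indicator_one _ hs

theorem IsSymmetric.eq_of_smul_le [IsProbabilityMeasure μ] (hsymm : κ.IsSymmetric μ)
    (hharm : ∀ h : X → ℝ, Measurable h → (∃ C, ∀ x, |h x| ≤ C) →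
      (∀ᵐ x ∂μ, ∫ y, h y ∂(κ x) = h x) → ∃ a : ℝ, ∀ᵐ x ∂μ, h x = a)
    {ν : Measure X} [IsProbabilityMeasure ν] (hν : ν.bind κ = ν) {α : ℝ≥0∞} (hα : α ≠ 0)
    (hle : α • ν ≤ μ) : ν = μ := by
  have hα_top : α ≠ ∞ := ne_top_of_le_ne_top ENNReal.one_ne_top (by simpa using hle Set.univ)
  obtain ⟨h, hm, hC, hdens⟩ := Measure.exists_bounded_density_of_smul_le hα hα_top hle
  obtain ⟨a, ha⟩ := hharm h hm ⟨_, hC⟩ (hsymm.ae_integral_eq_of_density hν hm hC hdens)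
  have hint : ∀ f : X → ℝ, ∫ x, f x ∂ν = a * ∫ x, f x ∂μ := fun f => by
    rw [hdens, ← integral_const_mul]
    exact integral_congr_ae (by filter_upwards [ha] with x hx; rw [hx])
  have ha1 : a = 1 := by simpa using (hint fun _ => 1).symm
  ext s hs
  have hs_eq := hint (s.indicator 1)
  rw [ha1, one_mul, integral_indicator_one hs, integral_indicator_one hs] at hs_eq
  exact (ENNReal.toReal_eq_toReal_iff' (measure_ne_top _ _) (measure_ne_top _ _)).1 hs_eq

end ProbabilityTheory.Kernel

end

theorem extremal_of_trivial_harmonic_general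
    {X : Type*} [MeasurableSpace X] (μ : Measure X) [IsProbabilityMeasure μ]
    (κ : Kernel X X) [IsMarkovKernel κ]
    (hsymm : ∀ f g : X → ℝ, Measurable f → Measurable g →
      (∃ C, ∀ x, |f x| ≤ C) → (∃ C, ∀ x, |g x| ≤ C) →
      ∫ x, f x * ∫ y, g y ∂(κ x) ∂μ = ∫ x, (∫ y, f y ∂(κ x)) * g x ∂μ)
    (hharm : ∀ h : X → ℝ, Measurable h → (∃ C, ∀ x, |h x| ≤ C) →
      (∀ᵐ x ∂μ, ∫ y, h y ∂(κ x) = h x) → ∃ a : ℝ, ∀ᵐ x ∂μ, h x = a)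
    (μ₁ μ₂ : Measure X) [IsProbabilityMeasure μ₁] [IsProbabilityMeasure μ₂]
    (hinv₁ : μ₁.bind (fun x => κ x) = μ₁) (hinv₂ : μ₂.bind (fun x => κ x) = μ₂)
    (α₁ α₂ : ℝ≥0∞) (hα₁ : 0 < α₁) (hα₂ : 0 < α₂)
    (hmix : μ = α₁ • μ₁ + α₂ • μ₂) :
    μ₁ = μ ∧ μ₂ = μ := by
  have hle₁ : α₁ • μ₁ ≤ μ := hmix ▸ Measure.le_add_right le_rfl
  have hle₂ : α₂ • μ₂ ≤ μ := hmix ▸ Measure.le_add_left le_rfl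
  exact ⟨Kernel.IsSymmetric.eq_of_smul_le hsymm hharm hinv₁ hα₁.ne' hle₁,
    Kernel.IsSymmetric.eq_of_smul_le hsymm hharm hinv₂ hα₂.ne' hle₂⟩

/-- Lemma 5.1 (abstract form): a `κ`-invariant, `κ`-symmetric probability measure `μ` all of
whose bounded harmonic functions are trivial is extremal in the set of `κ`-invariant
probability measures. -/
theorem extremal_of_trivial_harmonic
    {X : Type*} [MeasurableSpace X] (μ : Measure X) [IsProbabilityMeasure μ]
    (κ : Kernel X X) [IsMarkovKernel κ]
    (hinv : μ.bind (fun x => κ x) = μ)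
    (hsymm : ∀ f g : X → ℝ, Measurable f → Measurable g →
      (∃ C, ∀ x, |f x| ≤ C) → (∃ C, ∀ x, |g x| ≤ C) →
      ∫ x, f x * ∫ y, g y ∂(κ x) ∂μ = ∫ x, (∫ y, f y ∂(κ x)) * g x ∂μ)
    (hharm : ∀ h : X → ℝ, Measurable h → (∃ C, ∀ x, |h x| ≤ C) →
      (∀ᵐ x ∂μ, ∫ y, h y ∂(κ x) = h x) → ∃ a : ℝ, ∀ᵐ x ∂μ, h x = a)
    (μ₁ μ₂ : Measure X) [IsProbabilityMeasure μ₁] [IsProbabilityMeasure μ₂]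
    (hinv₁ : μ₁.bind (fun x => κ x) = μ₁) (hinv₂ : μ₂.bind (fun x => κ x) = μ₂)
    (α₁ α₂ : ℝ≥0∞) (hα₁ : 0 < α₁) (hα₁' : α₁ < 1) (hα₂ : 0 < α₂) (hα₂' : α₂ < 1)
    (hsum : α₁ + α₂ = 1) (hmix : μ = α₁ • μ₁ + α₂ • μ₂) :
    μ₁ = μ ∧ μ₂ = μ :=
  extremal_of_trivial_harmonic_general μ κ hsymm hharm μ₁ μ₂ hinv₁ hinv₂ α₁ α₂ hα₁ hα₂ hmix
end

section
/- Ergodicity of the stationary Markov shift when bounded harmonic functions are trivial (the discrete-time counterpart of Theorem 1.2, obtained from Lemma 5.1 together with the equivalence between extremality of the invariant measure and ergodicity of the shift): Let (X, 𝓑) be a measurable space, κ a Markov kernel on X, and μ a probability measure on X invariant under κ (μ.bind κ = μ). Let P_μ be the probability measure on the path space X^ℕ of the stationary Markov chain with initial distribution μ and transition kernel κ, i.e., P_μ = ∫_X P_x μ(dx) where P_x is the Ionescu–Tulcea law of the chain (ω_0, ω_1, ω_2, …) started at ω_0 = x with one-step transitions κ. Assume every bounded measurable h : X → ℝ with ∫_X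 h(y) κ(x,dy) = h(x) for μ-a.e. x is μ-a.e. constant. Then the one-sided shift θ : X^ℕ → X^ℕ, θ(ω)(n) = ω(n+1), preserves P_μ and is ergodic: every measurable A ⊆ X^ℕ with θ^{-1}(A) = A satisfies P_μ(A) ∈ {0, 1}. -/
/-!
Shift invariance: by the Markov property, the law of `(ω n, …, ω (n + N))` is obtained by
integrating the `N`-step expectations of the chain against the law of `ω n`, which is `μ` for
every `n` because `μ` is invariant; so `P` and its shift agree on cylinders.

Ergodicity: let `A` be shift invariant and let `h` be the density, with respect to `μ`, of the law
of `ω 0` under `P` restricted to `A`. Invariance of `A` under the `n`-fold shift and the Markov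
property at time `n` give `P (E ∩ A) = ∫_E h (ω n) dP` for every event `E` determined by
`ω 0, …, ω n`, i.e. `h (ω n) = P[A | ω 0, …, ω n]`. Comparing `n = 0` with `n = 1` shows that `h` is
harmonic, hence a.e. equal to a constant `c`. Then `P` restricted to `A` is `c • P`, and evaluating
on `Aᶜ` gives `P A * P Aᶜ = 0`.
-/

open MeasureTheory ProbabilityTheory Set
open scoped ENNReal

lemma Measurable.finSnoc {α X : Type*} [MeasurableSpace α] [MeasurableSpace X] {n : ℕ}
    {f : α → Fin (n + 1) → X} {g : α → X} (hf : Measurable f) (hg : Measurable g) :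
    Measurable fun a => (Fin.snoc (f a) (g a) : Fin (n + 2) → X) := by
  refine measurable_pi_lambda _ fun j => ?_
  induction j using Fin.lastCases with
  | last => simpa using hg
  | cast i =>
    simp only [Fin.snoc_castSucc]
    exact (measurable_pi_apply i).comp hf

lemma lintegral_indicator_one_comp_mul {α β : Type*} [MeasurableSpace α] [MeasurableSpace β]
    (P : Measure α) {g : α → β} (hg : Measurable g) {s : Set β} (hs : MeasurableSet s)
    (F : α → ℝ≥0∞) : ∫⁻ a, s.indicator 1 (g a) * F a ∂P = ∫⁻ a in g ⁻¹' s, F a ∂P := by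
  rw [← lintegral_indicator (hg hs)]
  refine lintegral_congr fun a => ?_
  by_cases ha : g a ∈ s <;> simp [ha]

lemma lintegral_indicator_one_comp {α β : Type*} [MeasurableSpace α] [MeasurableSpace β]
    (P : Measure α) {g : α → β} (hg : Measurable g) {s : Set β} (hs : MeasurableSet s) :
    ∫⁻ a, s.indicator 1 (g a) ∂P = P (g ⁻¹' s) :=
  (lintegral_indicator_const_comp hg hs 1).trans (one_mul _)

lemma prob_eq_zero_or_one_of_restrict_eq_smul {α : Type*} [MeasurableSpace α] {P : Measure α}
    [IsProbabilityMeasure P] {A : Set α} (hA : MeasurableSet A) {c : ℝ≥0∞}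
    (h : P.restrict A = c • P) : P A = 0 ∨ P A = 1 := by
  have hc : P A = c := by simpa using congrArg (· univ) h
  have hAc : P A * P Aᶜ = 0 := by
    simpa [Measure.restrict_apply hA.compl, hc] using (congrArg (· Aᶜ) h).symm
  rcases mul_eq_zero.mp hAc with h0 | h1
  · exact .inl h0
  · exact .inr ((prob_compl_eq_zero_iff hA).mp h1)

lemma exists_withDensity_eq_of_le {α : Type*} [MeasurableSpace α] {ρ ν : Measure α}
    [IsFiniteMeasure ν] (h : ρ ≤ ν) :
    ∃ ψ : α → ℝ≥0∞, Measurable ψ ∧ (∀ x, ψ x ≤ 1) ∧ ν.withDensity ψ = ρ := by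
  have : IsFiniteMeasure ρ := isFiniteMeasure_of_le ν h
  refine ⟨fun x => min (ρ.rnDeriv ν x) 1, (Measure.measurable_rnDeriv ρ ν).min measurable_const,
    fun x => min_le_right _ _,
    (withDensity_congr_ae ?_).trans (Measure.withDensity_rnDeriv_eq ρ ν h.absolutelyContinuous)⟩
  filter_upwards [Measure.rnDeriv_le_one_of_le h] with x hx using min_eq_left hx

/-- `ψ ∘ Y` is a version of the conditional probability of `s` given `Y`. -/
lemma exists_setLIntegral_comp_eq_lintegral_mul {Ω α : Type*} [MeasurableSpace Ω]
    [MeasurableSpace α] (P : Measure Ω) [IsFiniteMeasure P] {Y : Ω → α} (hY : Measurable Y)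
    (s : Set Ω) :
    ∃ ψ : α → ℝ≥0∞, Measurable ψ ∧ (∀ x, ψ x ≤ 1) ∧ ∀ φ : α → ℝ≥0∞, Measurable φ →
      ∫⁻ ω in s, φ (Y ω) ∂P = ∫⁻ ω, ψ (Y ω) * φ (Y ω) ∂P := by
  obtain ⟨ψ, hψ, hψ1, hρ⟩ := exists_withDensity_eq_of_le
    (Measure.map_mono (Measure.restrict_le_self (μ := P) (s := s)) hY)
  refine ⟨ψ, hψ, hψ1, fun φ hφ => ?_⟩
  rw [← lintegral_map hφ hY, ← hρ, lintegral_withDensity_eq_lintegral_mul _ hψ hφ,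
    lintegral_map (hψ.mul hφ) hY]
  rfl

namespace MarkovShift

variable {X : Type*}

def window (n : ℕ) (ω : ℕ → X) : Fin (n + 1) → X := fun i => ω i

def shiftBy (n : ℕ) (ω : ℕ → X) : ℕ → X := fun k => ω (n + k)

def pathShift (ω : ℕ → X) : ℕ → X := fun n => ω (n + 1)

lemma window_succ (n : ℕ) (ω : ℕ → X) :
    window (n + 1) ω = Fin.snoc (window n ω) (ω (n + 1)) := by
  ext i
  induction i using Fin.lastCases <;> simp [window]

lemma shiftBy_eq_iterate (n : ℕ) : shiftBy n = (pathShift (X := X))^[n] := by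
  induction n with
  | zero => ext; simp [shiftBy]
  | succ n ih =>
    rw [Function.iterate_succ, ← ih]
    ext ω k
    simp only [shiftBy, pathShift, Function.comp_apply]
    congr 1
    omega

lemma preimage_shiftBy_of_preimage_pathShift {A : Set (ℕ → X)} (hAinv : pathShift ⁻¹' A = A)
    (n : ℕ) : shiftBy n ⁻¹' A = A := by
  rw [shiftBy_eq_iterate]
  exact Function.IsFixedPt.preimage_iterate hAinv n

variable [MeasurableSpace X]

@[fun_prop]
lemma measurable_window (n : ℕ) : Measurable (window (X := X) n) :=
  measurable_pi_lambda _ fun _ => measurable_pi_apply _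

@[fun_prop]
lemma measurable_shiftBy (n : ℕ) : Measurable (shiftBy (X := X) n) :=
  measurable_pi_lambda _ fun _ => measurable_pi_apply _

@[fun_prop]
lemma measurable_pathShift : Measurable (pathShift (X := X)) :=
  measurable_pi_lambda _ fun _ => measurable_pi_apply _

lemma measurePreserving_shiftBy {P : Measure (ℕ → X)} (hP : MeasurePreserving pathShift P P)
    (n : ℕ) : MeasurePreserving (shiftBy n) P P := by
  rw [shiftBy_eq_iterate]
  exact hP.iterate n

lemma ext_of_measure_preimage_window {μ ν : Measure (ℕ → X)} [IsFiniteMeasure μ]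
    (h : ∀ (N : ℕ) (C : Set (Fin (N + 1) → X)), MeasurableSet C →
      μ (window N ⁻¹' C) = ν (window N ⁻¹' C)) : μ = ν := by
  refine ext_of_generate_finite _ generateFrom_measurableCylinders.symm
    isPiSystem_measurableCylinders ?_ (by simpa using h 0 univ .univ)
  intro t ht
  obtain ⟨s, S, hS, rfl⟩ := (mem_measurableCylinders t).mp ht
  have hlt (i : s) : (i : ℕ) < s.sup id + 1 := Nat.lt_succ_of_le (s.le_sup (f := id) i.2)
  exact h _ ((fun v (i : s) => v ⟨i, hlt i⟩) ⁻¹' S)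
    ((measurable_pi_lambda _ fun _ => measurable_pi_apply _) hS)

/-- `chainLIntegral κ N G x` is the expectation of `G (ω 0, …, ω N)` for the chain started at `x`;
the last step is integrated out first. -/
noncomputable def chainLIntegral (κ : Kernel X X) :
    (N : ℕ) → ((Fin (N + 1) → X) → ℝ≥0∞) → X → ℝ≥0∞
  | 0, G, x => G fun _ => x
  | N + 1, G, x => chainLIntegral κ N (fun v => ∫⁻ y, G (Fin.snoc v y) ∂κ (v (Fin.last N))) x

lemma measurable_lintegral_snoc (κ : Kernel X X) [IsSFiniteKernel κ] {N : ℕ}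
    {G : (Fin (N + 2) → X) → ℝ≥0∞} (hG : Measurable G) :
    Measurable fun v : Fin (N + 1) → X => ∫⁻ y, G (Fin.snoc v y) ∂κ (v (Fin.last N)) :=
  Measurable.lintegral_kernel_prod_right' (κ := κ.comap _ (measurable_pi_apply (Fin.last N)))
    (hG.comp (Measurable.finSnoc measurable_fst measurable_snd))

lemma measurable_chainLIntegral (κ : Kernel X X) [IsSFiniteKernel κ] :
    ∀ (N : ℕ) {G : (Fin (N + 1) → X) → ℝ≥0∞}, Measurable G → Measurable (chainLIntegral κ N G)
  | 0, _, hG => hG.comp (measurable_pi_lambda _ fun _ => measurable_id)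
  | N + 1, _, hG => measurable_chainLIntegral κ N (measurable_lintegral_snoc κ hG)

def BoundedHarmonicTrivial (κ : Kernel X X) (μ : Measure X) : Prop :=
  ∀ h : X → ℝ, Measurable h → (∃ C, ∀ x, |h x| ≤ C) →
    (∀ᵐ x ∂μ, ∫ y, h y ∂(κ x) = h x) → ∃ a : ℝ, ∀ᵐ x ∂μ, h x = a

lemma BoundedHarmonicTrivial.exists_ae_eq_const {κ : Kernel X X} {μ : Measure X}
    (hκμ : BoundedHarmonicTrivial κ μ) {h : X → ℝ≥0∞} (hh : Measurable h) (hh1 : ∀ x, h x ≤ 1)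
    (hharm : ∀ᵐ x ∂μ, ∫⁻ y, h y ∂κ x = h x) : ∃ c, ∀ᵐ x ∂μ, h x = c := by
  have hfin (x : X) : h x ≠ ∞ := ne_top_of_le_ne_top ENNReal.one_ne_top (hh1 x)
  have hbound : ∃ C, ∀ x, |(h x).toReal| ≤ C := ⟨1, fun x => by
    simpa using ENNReal.toReal_mono ENNReal.one_ne_top (hh1 x)⟩
  obtain ⟨a, ha⟩ := hκμ (fun x => (h x).toReal) hh.ennreal_toReal hbound <| by
    filter_upwards [hharm] with x hx
    rw [integral_toReal hh.aemeasurable (ae_of_all _ fun y => (hfin y).lt_top), hx]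
  refine ⟨ENNReal.ofReal a, ?_⟩
  filter_upwards [ha] with x hx
  rw [← hx, ENNReal.ofReal_toReal (hfin x)]

def HasMarkovProperty (κ : Kernel X X) (P : Measure (ℕ → X)) : Prop :=
  ∀ (n : ℕ) (F : (Fin (n + 1) → X) → ℝ) (g : X → ℝ), Measurable F → Measurable g →
    (∃ C, ∀ v, |F v| ≤ C) → (∃ C, ∀ x, |g x| ≤ C) →
    ∫ ω, F (window n ω) * g (ω (n + 1)) ∂P = ∫ ω, F (window n ω) * ∫ y, g y ∂(κ (ω n)) ∂P

section Markov

variable {κ : Kernel X X} [IsMarkovKernel κ] {P : Measure (ℕ → X)} [IsFiniteMeasure P]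

lemma HasMarkovProperty.measure_window_inter_eval_succ (hM : HasMarkovProperty κ P) (n : ℕ)
    {S : Set (Fin (n + 1) → X)} (hS : MeasurableSet S) {B : Set X} (hB : MeasurableSet B) :
    P (window n ⁻¹' S ∩ (fun ω => ω (n + 1)) ⁻¹' B) = ∫⁻ ω in window n ⁻¹' S, κ (ω n) B ∂P := by
  have hSm : MeasurableSet (window n ⁻¹' S) := measurable_window n hS
  have h := hM n (S.indicator 1) (B.indicator 1) (measurable_one.indicator hS)
    (measurable_one.indicator hB) ⟨1, fun v => by by_cases hv : v ∈ S <;> simp [hv]⟩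
    ⟨1, fun x => by by_cases hx : x ∈ B <;> simp [hx]⟩
  have hl (ω : ℕ → X) : (S.indicator 1 (window n ω) * B.indicator 1 (ω (n + 1)) : ℝ) =
      (window n ⁻¹' S ∩ (fun ω => ω (n + 1)) ⁻¹' B).indicator 1 ω := by
    by_cases h1 : window n ω ∈ S <;> by_cases h2 : ω (n + 1) ∈ B <;> simp [h1, h2]
  have hr (ω : ℕ → X) : (S.indicator 1 (window n ω) * ∫ y, B.indicator 1 y ∂κ (ω n) : ℝ) =
      (window n ⁻¹' S).indicator (fun ω => (κ (ω n)).real B) ω := by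
    by_cases h1 : window n ω ∈ S <;> simp [h1, integral_indicator_one hB]
  simp_rw [hl, hr, integral_indicator_one (hSm.inter (measurable_pi_apply _ hB)),
    integral_indicator hSm] at h
  have hmeas : Measurable fun ω : ℕ → X => (κ (ω n)).real B :=
    (κ.measurable_coe hB).ennreal_toReal.comp (measurable_pi_apply n)
  rw [← ofReal_measureReal, h, ofReal_integral_eq_lintegral_ofReal]
  · simp
  · exact Integrable.of_bound hmeas.aestronglyMeasurable 1
      (ae_of_all _ fun ω => by simp [abs_of_nonneg measureReal_nonneg])
  · exact ae_of_all _ fun ω => measureReal_nonneg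

lemma HasMarkovProperty.map_window_eval_succ (hM : HasMarkovProperty κ P) (n : ℕ) :
    P.map (fun ω => (window n ω, ω (n + 1))) =
      P.map (window n) ⊗ₘ κ.comap (fun v : Fin (n + 1) → X => v (Fin.last n))
        (measurable_pi_apply _) := by
  refine Measure.ext_prod fun {S B} hS hB => ?_
  rw [Measure.map_apply (by fun_prop) (hS.prod hB), Measure.compProd_apply_prod hS hB,
    setLIntegral_map hS ((κ.comap _ _).measurable_coe hB) (measurable_window n), mk_preimage_prod]
  exact hM.measure_window_inter_eval_succ n hS hB

lemma HasMarkovProperty.lintegral_window_eval_succ (hM : HasMarkovProperty κ P) (n : ℕ)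
    {Φ : (Fin (n + 1) → X) × X → ℝ≥0∞} (hΦ : Measurable Φ) :
    ∫⁻ ω, Φ (window n ω, ω (n + 1)) ∂P = ∫⁻ ω, ∫⁻ y, Φ (window n ω, y) ∂κ (ω n) ∂P := by
  rw [← lintegral_map hΦ (by fun_prop), hM.map_window_eval_succ n, Measure.lintegral_compProd hΦ,
    lintegral_map hΦ.lintegral_kernel_prod_right' (measurable_window n)]
  rfl

lemma HasMarkovProperty.map_eval (hM : HasMarkovProperty κ P) {μ : Measure X}
    (h0 : P.map (fun ω => ω 0) = μ) (hinv : μ.bind κ = μ) (n : ℕ) :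
    P.map (fun ω => ω n) = μ := by
  induction n with
  | zero => exact h0
  | succ n ih =>
    ext B hB
    calc P.map (fun ω => ω (n + 1)) B = P (window n ⁻¹' univ ∩ (fun ω => ω (n + 1)) ⁻¹' B) := by
          rw [Measure.map_apply (measurable_pi_apply _) hB, preimage_univ, univ_inter]
      _ = ∫⁻ ω, κ (ω n) B ∂P := by
          rw [hM.measure_window_inter_eval_succ n .univ hB, preimage_univ, Measure.restrict_univ]
      _ = μ B := by
          rw [← lintegral_map (κ.measurable_coe hB) (measurable_pi_apply n), ih,
            ← Measure.bind_apply hB κ.aemeasurable, hinv]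

lemma HasMarkovProperty.lintegral_mul_window_shiftBy (hM : HasMarkovProperty κ P) (n : ℕ)
    {f : (Fin (n + 1) → X) → ℝ≥0∞} (hf : Measurable f) :
    ∀ (N : ℕ) {G : (Fin (N + 1) → X) → ℝ≥0∞}, Measurable G →
      ∫⁻ ω, f (window n ω) * G (window N (shiftBy n ω)) ∂P =
        ∫⁻ ω, f (window n ω) * chainLIntegral κ N G (ω n) ∂P
  | 0, G, hG => lintegral_congr fun ω => by
    congr 2
    funext i
    fin_cases i
    rfl
  | N + 1, G, hG => by
    -- `Φ (window (n + N) ω, y)` is definitionally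
    -- `f (window n ω) * G (Fin.snoc (window N (shiftBy n ω)) y)`.
    let Φ : (Fin (n + N + 1) → X) × X → ℝ≥0∞ := fun p =>
      f (fun i => p.1 ⟨i, by omega⟩) * G (Fin.snoc (fun i => p.1 ⟨n + i, by omega⟩) p.2)
    have hΦ : Measurable Φ :=
      (hf.comp (measurable_pi_lambda _ fun _ => (measurable_pi_apply _).comp measurable_fst)).mul
        (hG.comp (Measurable.finSnoc (measurable_pi_lambda _ fun _ =>
          (measurable_pi_apply _).comp measurable_fst) measurable_snd))
    calc ∫⁻ ω, f (window n ω) * G (window (N + 1) (shiftBy n ω)) ∂P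
        = ∫⁻ ω, Φ (window (n + N) ω, ω (n + N + 1)) ∂P := by simp_rw [window_succ]; rfl
      _ = ∫⁻ ω, ∫⁻ y, Φ (window (n + N) ω, y) ∂κ (ω (n + N)) ∂P :=
          hM.lintegral_window_eval_succ _ hΦ
      _ = ∫⁻ ω, f (window n ω) * (fun v => ∫⁻ y, G (Fin.snoc v y) ∂κ (v (Fin.last N)))
            (window N (shiftBy n ω)) ∂P := by
          refine lintegral_congr fun ω => ?_
          exact lintegral_const_mul (f (window n ω))
            (f := fun y => G (Fin.snoc (window N (shiftBy n ω)) y))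
            (hG.comp (Measurable.finSnoc measurable_const measurable_id))
      _ = ∫⁻ ω, f (window n ω) * chainLIntegral κ (N + 1) G (ω n) ∂P :=
          hM.lintegral_mul_window_shiftBy n hf N (measurable_lintegral_snoc κ hG)

lemma HasMarkovProperty.setLIntegral_eval_succ (hM : HasMarkovProperty κ P) (n : ℕ)
    {S : Set (Fin (n + 1) → X)} (hS : MeasurableSet S) {g : X → ℝ≥0∞} (hg : Measurable g) :
    ∫⁻ ω in window n ⁻¹' S, g (ω (n + 1)) ∂P = ∫⁻ ω in window n ⁻¹' S, ∫⁻ y, g y ∂κ (ω n) ∂P := by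
  rw [← lintegral_indicator_one_comp_mul P (measurable_window n) hS,
    ← lintegral_indicator_one_comp_mul P (measurable_window n) hS]
  have hΦ : Measurable fun p : (Fin (n + 1) → X) × X => S.indicator 1 p.1 * g p.2 :=
    ((measurable_one.indicator hS).comp measurable_fst).mul (hg.comp measurable_snd)
  exact (hM.lintegral_window_eval_succ n hΦ).trans
    (lintegral_congr fun ω => lintegral_const_mul (S.indicator 1 (window n ω)) hg)

lemma HasMarkovProperty.measure_preimage_window_shiftBy (hM : HasMarkovProperty κ P)
    {μ : Measure X} (h0 : P.map (fun ω => ω 0) = μ) (hinv : μ.bind κ = μ) (n N : ℕ)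
    {C : Set (Fin (N + 1) → X)} (hC : MeasurableSet C) :
    P (shiftBy n ⁻¹' (window N ⁻¹' C)) = ∫⁻ x, chainLIntegral κ N (C.indicator 1) x ∂μ := by
  have h := hM.lintegral_mul_window_shiftBy n measurable_one N (measurable_one.indicator hC)
  simp only [Pi.one_apply, one_mul] at h
  rw [← hM.map_eval h0 hinv n, lintegral_map (measurable_chainLIntegral κ N
      (measurable_one.indicator hC)) (measurable_pi_apply n), ← h, ← preimage_comp,
    lintegral_indicator_one_comp P (by fun_prop) hC]
  rfl

lemma HasMarkovProperty.measurePreserving_pathShift (hM : HasMarkovProperty κ P) {μ : Measure X}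
    (h0 : P.map (fun ω => ω 0) = μ) (hinv : μ.bind κ = μ) :
    MeasurePreserving pathShift P P := by
  refine ⟨measurable_pathShift, ext_of_measure_preimage_window fun N C hC => ?_⟩
  have hshift1 : shiftBy 1 = pathShift (X := X) := shiftBy_eq_iterate 1
  have hshift0 : shiftBy 0 = (id : (ℕ → X) → ℕ → X) := shiftBy_eq_iterate 0
  rw [Measure.map_apply measurable_pathShift (measurable_window N hC), ← hshift1,
    hM.measure_preimage_window_shiftBy h0 hinv 1 N hC,
    ← hM.measure_preimage_window_shiftBy h0 hinv 0 N hC, hshift0, preimage_id]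

/-- Given the past event `window n ⁻¹' S`, the future after time `n` depends on it only through
its conditional probability `ψ (ω n)` given the present. -/
lemma HasMarkovProperty.map_restrict_window_shiftBy (hM : HasMarkovProperty κ P) {n : ℕ}
    {S : Set (Fin (n + 1) → X)} (hS : MeasurableSet S) {ψ : X → ℝ≥0∞} (hψ : Measurable ψ)
    (hSψ : ∀ φ : X → ℝ≥0∞, Measurable φ →
      ∫⁻ ω in window n ⁻¹' S, φ (ω n) ∂P = ∫⁻ ω, ψ (ω n) * φ (ω n) ∂P) :
    (P.restrict (window n ⁻¹' S)).map (shiftBy n) =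
      (P.withDensity fun ω => ψ (ω n)).map (shiftBy n) := by
  refine ext_of_measure_preimage_window fun N C hC => ?_
  have hg : Measurable (window N ∘ shiftBy (X := X) n) := by fun_prop
  have hT := measurable_chainLIntegral κ N (measurable_one.indicator hC)
  rw [Measure.map_apply (measurable_shiftBy n) (measurable_window N hC),
    Measure.map_apply (measurable_shiftBy n) (measurable_window N hC), ← preimage_comp,
    withDensity_apply _ (hg hC), ← lintegral_indicator_one_comp _ hg hC]
  calc ∫⁻ ω in window n ⁻¹' S, C.indicator 1 (window N (shiftBy n ω)) ∂P
      = ∫⁻ ω, S.indicator 1 (window n ω) * C.indicator 1 (window N (shiftBy n ω)) ∂P :=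
        (lintegral_indicator_one_comp_mul P (measurable_window n) hS _).symm
    _ = ∫⁻ ω, S.indicator 1 (window n ω) * chainLIntegral κ N (C.indicator 1) (ω n) ∂P :=
        hM.lintegral_mul_window_shiftBy n (measurable_one.indicator hS) N
          (measurable_one.indicator hC)
    _ = ∫⁻ ω, ψ (ω n) * chainLIntegral κ N (C.indicator 1) (ω n) ∂P := by
        rw [lintegral_indicator_one_comp_mul P (measurable_window n) hS, hSψ _ hT]
    _ = ∫⁻ ω, ψ (ω n) * C.indicator 1 (window N (shiftBy n ω)) ∂P :=
        (hM.lintegral_mul_window_shiftBy n (hψ.comp (measurable_pi_apply (Fin.last n))) N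
          (measurable_one.indicator hC)).symm
    _ = ∫⁻ ω in (window N ∘ shiftBy n) ⁻¹' C, ψ (ω n) ∂P := by
        simp_rw [mul_comm (ψ _)]
        exact lintegral_indicator_one_comp_mul P hg hC _

end Markov

section Invariant

variable {κ : Kernel X X} [IsMarkovKernel κ] {P : Measure (ℕ → X)} [IsFiniteMeasure P]
  {A : Set (ℕ → X)} {h : X → ℝ≥0∞}

lemma HasMarkovProperty.measure_window_inter_eq_setLIntegral (hM : HasMarkovProperty κ P)
    (hP : MeasurePreserving pathShift P P) (hA : MeasurableSet A) (hAinv : pathShift ⁻¹' A = A)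
    (hh : Measurable h)
    (hAh : ∀ φ : X → ℝ≥0∞, Measurable φ → ∫⁻ ω in A, φ (ω 0) ∂P = ∫⁻ ω, h (ω 0) * φ (ω 0) ∂P)
    (n : ℕ) {S : Set (Fin (n + 1) → X)} (hS : MeasurableSet S) :
    P (window n ⁻¹' S ∩ A) = ∫⁻ ω in window n ⁻¹' S, h (ω n) ∂P := by
  obtain ⟨ψ, hψ, -, hSψ⟩ :=
    exists_setLIntegral_comp_eq_lintegral_mul P (measurable_pi_apply n) (window n ⁻¹' S)
  have hAn := preimage_shiftBy_of_preimage_pathShift hAinv n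
  have hPA : MeasurePreserving (shiftBy n) (P.restrict A) (P.restrict A) := by
    simpa only [hAn] using (measurePreserving_shiftBy hP n).restrict_preimage hA
  calc P (window n ⁻¹' S ∩ A)
      = (P.restrict (window n ⁻¹' S)).map (shiftBy n) A := by
        rw [Measure.map_apply (measurable_shiftBy n) hA, hAn, Measure.restrict_apply hA,
          inter_comm]
    _ = (P.withDensity fun ω => ψ (ω n)).map (shiftBy n) A := by
        rw [hM.map_restrict_window_shiftBy hS hψ hSψ]
    _ = ∫⁻ ω in A, ψ (ω n) ∂P := by
        rw [Measure.map_apply (measurable_shiftBy n) hA, hAn, withDensity_apply _ hA]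
    _ = ∫⁻ ω in A, ψ (ω 0) ∂P := hPA.lintegral_comp (hψ.comp (measurable_pi_apply 0))
    _ = ∫⁻ ω, h (ω 0) * ψ (ω 0) ∂P := hAh ψ hψ
    _ = ∫⁻ ω, h (ω n) * ψ (ω n) ∂P := ((measurePreserving_shiftBy hP n).lintegral_comp
          (f := fun ω => h (ω 0) * ψ (ω 0)) (by fun_prop)).symm
    _ = ∫⁻ ω, ψ (ω n) * h (ω n) ∂P := by simp_rw [mul_comm]
    _ = ∫⁻ ω in window n ⁻¹' S, h (ω n) ∂P := (hSψ h hh).symm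

lemma HasMarkovProperty.ae_lintegral_eq_of_invariant (hM : HasMarkovProperty κ P)
    (hP : MeasurePreserving pathShift P P) (hA : MeasurableSet A) (hAinv : pathShift ⁻¹' A = A)
    (hh : Measurable h)
    (hAh : ∀ φ : X → ℝ≥0∞, Measurable φ → ∫⁻ ω in A, φ (ω 0) ∂P = ∫⁻ ω, h (ω 0) * φ (ω 0) ∂P) :
    ∀ᵐ x ∂(P.map fun ω => ω 0), ∫⁻ y, h y ∂κ x = h x := by
  refine ae_eq_of_forall_setLIntegral_eq_of_sigmaFinite hh.lintegral_kernel hh fun B hB _ => ?_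
  have hB0 : MeasurableSet ((fun v => v 0) ⁻¹' B : Set (Fin 1 → X)) := measurable_pi_apply 0 hB
  have hB1 : MeasurableSet ((fun v => v 0) ⁻¹' B : Set (Fin 2 → X)) := measurable_pi_apply 0 hB
  have key := hM.measure_window_inter_eq_setLIntegral hP hA hAinv hh hAh
  calc ∫⁻ x in B, ∫⁻ y, h y ∂κ x ∂(P.map fun ω => ω 0)
      = ∫⁻ ω in window 0 ⁻¹' ((fun v => v 0) ⁻¹' B), ∫⁻ y, h y ∂κ (ω 0) ∂P :=
        setLIntegral_map hB hh.lintegral_kernel (measurable_pi_apply 0)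
    _ = ∫⁻ ω in window 0 ⁻¹' ((fun v => v 0) ⁻¹' B), h (ω 1) ∂P :=
        (hM.setLIntegral_eval_succ 0 hB0 hh).symm
    _ = P (window 1 ⁻¹' ((fun v => v 0) ⁻¹' B) ∩ A) := (key 1 hB1).symm
    _ = ∫⁻ ω in window 0 ⁻¹' ((fun v => v 0) ⁻¹' B), h (ω 0) ∂P := key 0 hB0
    _ = ∫⁻ x in B, h x ∂(P.map fun ω => ω 0) :=
        (setLIntegral_map hB hh (measurable_pi_apply 0)).symm

lemma HasMarkovProperty.restrict_eq_smul_of_ae_eq_const (hM : HasMarkovProperty κ P)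
    (hP : MeasurePreserving pathShift P P) (hA : MeasurableSet A) (hAinv : pathShift ⁻¹' A = A)
    (hh : Measurable h)
    (hAh : ∀ φ : X → ℝ≥0∞, Measurable φ → ∫⁻ ω in A, φ (ω 0) ∂P = ∫⁻ ω, h (ω 0) * φ (ω 0) ∂P)
    {c : ℝ≥0∞} (hc : ∀ᵐ x ∂(P.map fun ω => ω 0), h x = c) :
    P.restrict A = c • P := by
  have hc0 : ∀ᵐ ω ∂P, h (ω 0) = c := ae_of_ae_map (measurable_pi_apply 0).aemeasurable hc
  refine ext_of_measure_preimage_window fun N C hC => ?_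
  have hcN : ∀ᵐ ω ∂P, h (ω N) = c :=
    (measurePreserving_shiftBy hP N).quasiMeasurePreserving.ae hc0
  rw [Measure.restrict_apply (measurable_window N hC),
    hM.measure_window_inter_eq_setLIntegral hP hA hAinv hh hAh N hC,
    lintegral_congr_ae (ae_restrict_of_ae hcN), setLIntegral_const, Measure.smul_apply,
    smul_eq_mul, mul_comm]

end Invariant

end MarkovShift

open MarkovShift in
theorem stationary_markov_shift_ergodic_of_trivial_harmonic_general
    {X : Type*} [MeasurableSpace X]
    (κ : Kernel X X) [IsMarkovKernel κ]
    (μ : Measure X)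
    (hinv : μ.bind (fun x => κ x) = μ)
    (Pμ : Measure (ℕ → X)) [IsProbabilityMeasure Pμ]
    (h0 : Pμ.map (fun ω => ω 0) = μ)
    (hMarkov : ∀ (n : ℕ) (F : (Fin (n + 1) → X) → ℝ) (g : X → ℝ),
      Measurable F → Measurable g →
      (∃ C, ∀ v, |F v| ≤ C) → (∃ C, ∀ x, |g x| ≤ C) →
      ∫ ω, F (fun i => ω (i : ℕ)) * g (ω (n + 1)) ∂Pμ =
        ∫ ω, F (fun i => ω (i : ℕ)) * ∫ y, g y ∂(κ (ω n)) ∂Pμ)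
    (hharm : ∀ h : X → ℝ, Measurable h → (∃ C, ∀ x, |h x| ≤ C) →
      (∀ᵐ x ∂μ, ∫ y, h y ∂(κ x) = h x) → ∃ a : ℝ, ∀ᵐ x ∂μ, h x = a) :
    Pμ.map (fun ω n => ω (n + 1)) = Pμ ∧
      ∀ A : Set (ℕ → X), MeasurableSet A →
        (fun ω n => ω (n + 1)) ⁻¹' A = A → Pμ A = 0 ∨ Pμ A = 1 := by
  have hM : HasMarkovProperty κ Pμ := hMarkov
  have hκμ : BoundedHarmonicTrivial κ μ := hharm
  have hP := hM.measurePreserving_pathShift h0 hinv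
  refine ⟨hP.map_eq, fun A hA hAinv => ?_⟩
  obtain ⟨h, hh, hh1, hAh⟩ :=
    exists_setLIntegral_comp_eq_lintegral_mul Pμ (measurable_pi_apply 0) A
  have hharmonic := hM.ae_lintegral_eq_of_invariant hP hA hAinv hh hAh
  rw [h0] at hharmonic
  obtain ⟨c, hc⟩ := hκμ.exists_ae_eq_const hh hh1 hharmonic
  exact prob_eq_zero_or_one_of_restrict_eq_smul hA
    (hM.restrict_eq_smul_of_ae_eq_const hP hA hAinv hh hAh (h0 ▸ hc))

/-- Ergodicity of the stationary Markov shift when bounded harmonic functions are trivial.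
The stationary path measure `Pμ` on `X^ℕ` is characterized by its initial distribution `μ`
(the law of the coordinate `ω 0`) and the Markov property with one-step transition kernel
`κ` (this pins down `Pμ` as the Ionescu–Tulcea stationary chain law `∫ P_x μ(dx)`).
If every bounded measurable `κ`-harmonic function is `μ`-a.e. constant, then the one-sided
shift preserves `Pμ` and is ergodic. -/
theorem stationary_markov_shift_ergodic_of_trivial_harmonic
    {X : Type*} [MeasurableSpace X]
    (κ : Kernel X X) [IsMarkovKernel κ]
    (μ : Measure X) [IsProbabilityMeasure μ]
    (hinv : μ.bind (fun x => κ x) = μ)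
    (Pμ : Measure (ℕ → X)) [IsProbabilityMeasure Pμ]
    (h0 : Pμ.map (fun ω => ω 0) = μ)
    (hMarkov : ∀ (n : ℕ) (F : (Fin (n + 1) → X) → ℝ) (g : X → ℝ),
      Measurable F → Measurable g →
      (∃ C, ∀ v, |F v| ≤ C) → (∃ C, ∀ x, |g x| ≤ C) →
      ∫ ω, F (fun i => ω (i : ℕ)) * g (ω (n + 1)) ∂Pμ =
        ∫ ω, F (fun i => ω (i : ℕ)) * ∫ y, g y ∂(κ (ω n)) ∂Pμ)
    (hharm : ∀ h : X → ℝ, Measurable h → (∃ C, ∀ x, |h x| ≤ C) →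
      (∀ᵐ x ∂μ, ∫ y, h y ∂(κ x) = h x) → ∃ a : ℝ, ∀ᵐ x ∂μ, h x = a) :
    Pμ.map (fun ω n => ω (n + 1)) = Pμ ∧
      ∀ A : Set (ℕ → X), MeasurableSet A →
        (fun ω n => ω (n + 1)) ⁻¹' A = A → Pμ A = 0 ∨ Pμ A = 1 :=
  stationary_markov_shift_ergodic_of_trivial_harmonic_general κ μ hinv Pμ h0 hMarkov hharm
end
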